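/- arXiv:2307.05186 — 3 statements merged into one kernel-verified Lean document; each statement's English description precedes it below -/
import Mathlib

section
/- Every eigenvalue λ of S_{ρ,δ} = A(Θ^{-1}+ρI)^{-1}A^T + δI satisfies δ ≤ λ < δ + (2/ρ)·max_{v∈V} deg(v). -/
open Matrix

/-- Node-arc incidence matrix of a directed graph. -/
def incidenceMatrix {V E : Type*} [DecidableEq V]
    (src tgt : E → V) : Matrix V E ℝ :=
  fun v e => if src e = v then -1 else if tgt e = v then 1 else 0

theorem stmt_5 {V E : Type*} [Fintype V] [Fintype E] [Nonempty E] [DecidableEq V] [DecidableEq E]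
    (src tgt : E → V)
    (ρ δ : ℝ) (hρ : 0 < ρ) (hδ : 0 < δ)
    (θ : E → ℝ) (hθ : ∀ e, 0 < θ e)
    (deg : V → ℕ)
    (hdeg : ∀ v, deg v = (Finset.univ.filter (fun e => src e = v ∨ tgt e = v)).card)
    (S : Matrix V V ℝ)
    (hS : S = (incidenceMatrix src tgt) *
              Matrix.diagonal (fun e => ((θ e)⁻¹ + ρ)⁻¹) *
              (incidenceMatrix src tgt)ᵀ + δ • (1 : Matrix V V ℝ))
    (lam : ℝ) (v : V → ℝ) (hv : v ≠ 0)
    (heig : S.mulVec v = lam • v) :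
    δ ≤ lam ∧ lam < δ + (2 / ρ) * (Finset.univ.sup deg : ℕ) := by
  classical
  set B := incidenceMatrix src tgt with hB
  set d : E → ℝ := fun e => ((θ e)⁻¹ + ρ)⁻¹ with hd
  set x : E → ℝ := Bᵀ.mulVec v with hxdef
  have hd_pos : ∀ e, 0 < d e := by
    intro e
    have h1 : 0 < (θ e)⁻¹ + ρ := by
      have := inv_pos.mpr (hθ e); linarith
    exact inv_pos.mpr h1
  have hd_lt : ∀ e, d e < ρ⁻¹ := by
    intro e
    have h1 : ρ < (θ e)⁻¹ + ρ := by
      have := inv_pos.mpr (hθ e); linarith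
    exact inv_strictAnti₀ hρ h1
  obtain ⟨w₀, hw₀⟩ : ∃ w, v w ≠ 0 := Function.ne_iff.mp hv
  have hn2 : 0 < ∑ w, v w ^ 2 := by
    apply Finset.sum_pos' (fun w _ => sq_nonneg _)
    exact ⟨w₀, Finset.mem_univ _, by positivity⟩
  -- explicit form of x
  have hx_loop : ∀ e, src e = tgt e → x e = -v (src e) := by
    intro e h
    have hsummand : ∀ w, Bᵀ e w * v w = if src e = w then -(v w) else 0 := by
      intro w
      simp only [hB, transpose_apply, incidenceMatrix]
      split_ifs with h1 h2
      · ring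
      · exact absurd (h.trans h2) h1
      · ring
    have : x e = ∑ w, Bᵀ e w * v w := rfl
    rw [this, Finset.sum_congr rfl (fun w _ => hsummand w), Finset.sum_ite_eq]
    simp
  have hx_nl : ∀ e, src e ≠ tgt e → x e = -v (src e) + v (tgt e) := by
    intro e h
    have hsummand : ∀ w, Bᵀ e w * v w =
        (if src e = w then -(v w) else 0) + (if tgt e = w then v w else 0) := by
      intro w
      simp only [hB, transpose_apply, incidenceMatrix]
      split_ifs with h1 h2 h3
      · exact absurd (h1.trans h2.symm) h
      · ring
      · ring
      · ring
    have : x e = ∑ w, Bᵀ e w * v w := rfl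
    rw [this, Finset.sum_congr rfl (fun w _ => hsummand w), Finset.sum_add_distrib,
      Finset.sum_ite_eq, Finset.sum_ite_eq]
    simp
  -- bound on x e ^ 2
  have hbound : ∀ e, x e ^ 2 ≤
      2 * ∑ w ∈ Finset.univ.filter (fun w => src e = w ∨ tgt e = w), v w ^ 2 := by
    intro e
    by_cases h : src e = tgt e
    · have hset : Finset.univ.filter (fun w => src e = w ∨ tgt e = w) = {src e} := by
        ext w
        simp [← h, eq_comm]
      rw [hset, Finset.sum_singleton, hx_loop e h]
      nlinarith [sq_nonneg (v (src e))]
    · have hset : Finset.univ.filter (fun w => src e = w ∨ tgt e = w) = {src e, tgt e} := by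
        ext w
        simp [eq_comm]
      rw [hset, Finset.sum_pair h, hx_nl e h]
      nlinarith [sq_nonneg (v (src e) + v (tgt e))]
  -- sum bound
  have hsum : ∑ e, x e ^ 2 ≤ 2 * ∑ w, (deg w : ℝ) * v w ^ 2 := by
    calc ∑ e, x e ^ 2
        ≤ ∑ e, 2 * ∑ w ∈ Finset.univ.filter (fun w => src e = w ∨ tgt e = w), v w ^ 2 :=
          Finset.sum_le_sum (fun e _ => hbound e)
      _ = 2 * ∑ e, ∑ w, if src e = w ∨ tgt e = w then v w ^ 2 else 0 := by
          rw [← Finset.mul_sum]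
          congr 1
          exact Finset.sum_congr rfl (fun e _ => Finset.sum_filter _ _)
      _ = 2 * ∑ w, ∑ e, if src e = w ∨ tgt e = w then v w ^ 2 else 0 := by
          rw [Finset.sum_comm]
      _ = 2 * ∑ w, (deg w : ℝ) * v w ^ 2 := by
          congr 1
          apply Finset.sum_congr rfl
          intro w _
          rw [← Finset.sum_filter, Finset.sum_const, nsmul_eq_mul, hdeg w]
  have hdegsum : ∑ w, (deg w : ℝ) * v w ^ 2 ≤ ((Finset.univ.sup deg : ℕ) : ℝ) * ∑ w, v w ^ 2 := by
    rw [Finset.mul_sum]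
    apply Finset.sum_le_sum
    intro w _
    exact mul_le_mul_of_nonneg_right (Nat.cast_le.mpr (Finset.le_sup (Finset.mem_univ w)))
      (sq_nonneg _)
  have hsup1 : (1 : ℝ) ≤ ((Finset.univ.sup deg : ℕ) : ℝ) := by
    have e₀ : E := Classical.arbitrary E
    have h1 : 1 ≤ deg (src e₀) := by
      rw [hdeg]
      exact Finset.card_pos.mpr ⟨e₀, by simp⟩
    have h2 : deg (src e₀) ≤ Finset.univ.sup deg := Finset.le_sup (Finset.mem_univ _)
    exact_mod_cast h1.trans h2
  -- the quadratic form identity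
  have hleft : v ⬝ᵥ S.mulVec v = lam * ∑ w, v w ^ 2 := by
    rw [heig]
    have : v ⬝ᵥ (lam • v) = ∑ w, v w * (lam * v w) := rfl
    rw [this, Finset.mul_sum]
    exact Finset.sum_congr rfl (fun w _ => by ring)
  have hright : v ⬝ᵥ S.mulVec v = (∑ e, d e * x e ^ 2) + δ * ∑ w, v w ^ 2 := by
    rw [hS, add_mulVec, dotProduct_add, smul_mulVec, one_mulVec]
    congr 1
    · rw [← mulVec_mulVec, ← mulVec_mulVec, dotProduct_mulVec, ← mulVec_transpose]
      have : (Bᵀ *ᵥ v) ⬝ᵥ (Matrix.diagonal d *ᵥ (Bᵀ *ᵥ v)) =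
          ∑ e, x e * (d e * x e) := by
        simp only [dotProduct, ← hxdef, mulVec_diagonal]
      rw [this]
      exact Finset.sum_congr rfl (fun e _ => by ring)
    · have : v ⬝ᵥ (δ • v) = ∑ w, v w * (δ * v w) := rfl
      rw [this, Finset.mul_sum]
      exact Finset.sum_congr rfl (fun w _ => by ring)
  have key : lam * ∑ w, v w ^ 2 = (∑ e, d e * x e ^ 2) + δ * ∑ w, v w ^ 2 :=
    hleft.symm.trans hright
  have hq_nonneg : 0 ≤ ∑ e, d e * x e ^ 2 :=
    Finset.sum_nonneg (fun e _ => mul_nonneg (hd_pos e).le (sq_nonneg _))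
  constructor
  · have : δ * ∑ w, v w ^ 2 ≤ lam * ∑ w, v w ^ 2 := by linarith
    exact le_of_mul_le_mul_right this hn2
  · by_cases hX : ∀ e, x e = 0
    · have hq0 : ∑ e, d e * x e ^ 2 = 0 := by
        apply Finset.sum_eq_zero
        intro e _
        rw [hX e]; ring
      have hlam : lam = δ := by
        have h1 : lam * ∑ w, v w ^ 2 = δ * ∑ w, v w ^ 2 := by rw [key, hq0]; ring
        exact mul_right_cancel₀ (ne_of_gt hn2) h1
      rw [hlam]
      have h2 : 0 < (2 / ρ) * ((Finset.univ.sup deg : ℕ) : ℝ) := by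
        apply mul_pos (by positivity)
        linarith
      linarith
    · push_neg at hX
      obtain ⟨e₀, he₀⟩ := hX
      have h1 : ∑ e, d e * x e ^ 2 < ∑ e, ρ⁻¹ * x e ^ 2 := by
        apply Finset.sum_lt_sum
          (fun e _ => mul_le_mul_of_nonneg_right (hd_lt e).le (sq_nonneg _))
        exact ⟨e₀, Finset.mem_univ _,
          mul_lt_mul_of_pos_right (hd_lt e₀) (by positivity)⟩
      have h2 : ∑ e, ρ⁻¹ * x e ^ 2 = ρ⁻¹ * ∑ e, x e ^ 2 := (Finset.mul_sum _ _ _).symm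
      have h3 : ρ⁻¹ * ∑ e, x e ^ 2 ≤
          (2 / ρ) * ((Finset.univ.sup deg : ℕ) : ℝ) * ∑ w, v w ^ 2 := by
        have h4 : ∑ e, x e ^ 2 ≤ 2 * (((Finset.univ.sup deg : ℕ) : ℝ) * ∑ w, v w ^ 2) := by
          calc ∑ e, x e ^ 2 ≤ 2 * ∑ w, (deg w : ℝ) * v w ^ 2 := hsum
            _ ≤ 2 * (((Finset.univ.sup deg : ℕ) : ℝ) * ∑ w, v w ^ 2) := by linarith
        have h5 : ρ⁻¹ * ∑ e, x e ^ 2 ≤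
            ρ⁻¹ * (2 * (((Finset.univ.sup deg : ℕ) : ℝ) * ∑ w, v w ^ 2)) :=
          mul_le_mul_of_nonneg_left h4 (by positivity)
        calc ρ⁻¹ * ∑ e, x e ^ 2
            ≤ ρ⁻¹ * (2 * (((Finset.univ.sup deg : ℕ) : ℝ) * ∑ w, v w ^ 2)) := h5
          _ = (2 / ρ) * ((Finset.univ.sup deg : ℕ) : ℝ) * ∑ w, v w ^ 2 := by
              field_simp
      have h6 : lam * ∑ w, v w ^ 2 <
          (δ + (2 / ρ) * ((Finset.univ.sup deg : ℕ) : ℝ)) * ∑ w, v w ^ 2 := by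
        rw [key]
        nlinarith
      exact lt_of_mul_lt_mul_right h6 hn2.le
end

section
/- Assume x_i s_i ≥ γ̲ · x^Ts/n for all i (with 0 < γ̲ < 1), σ ∈ (0,1), and the complementarity block s_iΔx_i + x_iΔs_i = σ x^Ts/n − x_i s_i holds. Define f_i(α) := (x_i+αΔx_i)(s_i+αΔs_i) − γ̲ (x+αΔx)^T(s+αΔs)/n. Then f_i(α) ≥ α²(Δx_iΔs_i − γ̲ Δx^TΔs/n) + α σ(1−γ̲) x^Ts/n for all α ∈ [0,1]. -/
/-!
Expanding both products along the Newton direction and using the complementarity block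
(summed over all coordinates for the total product), the difference between the two sides is
exactly `(1 - α) (xᵢ sᵢ - γ xᵀs / n)`, which is nonnegative on `[0, 1]` by the
neighbourhood condition.
-/

open Matrix

theorem add_smul_dotProduct_add_smul {ι R : Type*} [Fintype ι] [CommRing R]
    (x s Δx Δs : ι → R) (α : R) :
    (x + α • Δx) ⬝ᵥ (s + α • Δs) =
      x ⬝ᵥ s + α * (s ⬝ᵥ Δx + x ⬝ᵥ Δs) + α ^ 2 * (Δx ⬝ᵥ Δs) := by
  simp only [add_dotProduct, dotProduct_add, smul_dotProduct, dotProduct_smul, smul_eq_mul,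
    dotProduct_comm Δx s]
  ring

section NewtonStep

variable {n : ℕ} {x s Δx Δs : Fin n → ℝ} {σ : ℝ}

theorem newton_mul_step
    (hblock : ∀ i, s i * Δx i + x i * Δs i = σ * ((x ⬝ᵥ s) / n) - x i * s i)
    (i : Fin n) (α : ℝ) :
    (x i + α * Δx i) * (s i + α * Δs i) =
      (1 - α) * (x i * s i) + α * σ * ((x ⬝ᵥ s) / n) + α ^ 2 * (Δx i * Δs i) := by
  linear_combination α * hblock i

theorem newton_complementarity_sum [NeZero n]
    (hblock : ∀ i, s i * Δx i + x i * Δs i = σ * ((x ⬝ᵥ s) / n) - x i * s i) :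
    s ⬝ᵥ Δx + x ⬝ᵥ Δs = (σ - 1) * (x ⬝ᵥ s) := by
  calc s ⬝ᵥ Δx + x ⬝ᵥ Δs = ∑ i, (s i * Δx i + x i * Δs i) := by
        simp only [dotProduct, Finset.sum_add_distrib]
    _ = ∑ i : Fin n, (σ * ((x ⬝ᵥ s) / n) - x i * s i) := Finset.sum_congr rfl fun i _ => hblock i
    _ = (σ - 1) * (x ⬝ᵥ s) := by
        rw [Finset.sum_sub_distrib, Finset.sum_const, Finset.card_fin, nsmul_eq_mul]
        field_simp [NeZero.ne (n : ℝ)]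
        simp only [dotProduct]
        ring

theorem newton_dotProduct_step [NeZero n]
    (hblock : ∀ i, s i * Δx i + x i * Δs i = σ * ((x ⬝ᵥ s) / n) - x i * s i) (α : ℝ) :
    (x + α • Δx) ⬝ᵥ (s + α • Δs) =
      (1 - α) * (x ⬝ᵥ s) + α * σ * (x ⬝ᵥ s) + α ^ 2 * (Δx ⬝ᵥ Δs) := by
  rw [add_smul_dotProduct_add_smul, newton_complementarity_sum hblock]
  ring

end NewtonStep

theorem stmt_13_general {n : ℕ}
    (x s Δx Δs : Fin n → ℝ)
    (γ : ℝ)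
    (hnbhd : ∀ i, x i * s i ≥ γ * (x ⬝ᵥ s) / n)
    (σ : ℝ)
    (hblock : ∀ i, s i * Δx i + x i * Δs i = σ * ((x ⬝ᵥ s) / n) - x i * s i) :
    ∀ i, ∀ α ∈ Set.Icc (0 : ℝ) 1,
      (x i + α * Δx i) * (s i + α * Δs i) -
        γ * ((x + α • Δx) ⬝ᵥ (s + α • Δs)) / n ≥
      α ^ 2 * (Δx i * Δs i - γ * (Δx ⬝ᵥ Δs) / n) +
        α * σ * (1 - γ) * (x ⬝ᵥ s) / n := by
  intro i α ⟨_, hα1⟩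
  have : NeZero n := ⟨i.pos.ne'⟩
  rw [newton_mul_step hblock, newton_dotProduct_step hblock]
  linear_combination mul_nonneg (sub_nonneg.2 hα1) (sub_nonneg.2 (hnbhd i))

theorem stmt_13 {n : ℕ} (hn : 0 < n)
    (x s Δx Δs : Fin n → ℝ)
    (hx : ∀ i, 0 < x i) (hs : ∀ i, 0 < s i)
    (γ : ℝ) (hγ0 : 0 < γ) (hγ1 : γ < 1)
    (hnbhd : ∀ i, x i * s i ≥ γ * (x ⬝ᵥ s) / n)
    (σ : ℝ) (hσ : 0 < σ) (hσ1 : σ < 1)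
    (hblock : ∀ i, s i * Δx i + x i * Δs i = σ * ((x ⬝ᵥ s) / n) - x i * s i) :
    ∀ i, ∀ α ∈ Set.Icc (0 : ℝ) 1,
      (x i + α * Δx i) * (s i + α * Δs i) -
        γ * ((x + α • Δx) ⬝ᵥ (s + α • Δs)) / n ≥
      α ^ 2 * (Δx i * Δs i - γ * (Δx ⬝ᵥ Δs) / n) +
        α * σ * (1 - γ) * (x ⬝ᵥ s) / n :=
  stmt_13_general x s Δx Δs γ hnbhd σ hblock
end

section
/- The condition number of S_{ρ,δ} = A(Θ^{-1}+ρI)^{-1}A^T + δI satisfies k₂(S_{ρ,δ}) ≤ 1 + (2 max_v deg(v))/(δρ). -/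
open Matrix

lemma eig_bounds {V E : Type*} [Fintype V] [Fintype E] [DecidableEq V] [DecidableEq E]
    (src tgt : E → V)
    (ρ δ : ℝ) (hρ : 0 < ρ) (hδ : 0 < δ)
    (θ : E → ℝ) (hθ : ∀ e, 0 < θ e)
    (deg : V → ℕ)
    (hdeg : ∀ v, deg v = (Finset.univ.filter (fun e => src e = v ∨ tgt e = v)).card)
    (S : Matrix V V ℝ)
    (hS : S = (incidenceMatrix src tgt) *
              Matrix.diagonal (fun e => ((θ e)⁻¹ + ρ)⁻¹) *
              (incidenceMatrix src tgt)ᵀ + δ • (1 : Matrix V V ℝ))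
    (lam : ℝ) (x : V → ℝ) (hx : x ≠ 0) (heig : S.mulVec x = lam • x) :
    δ ≤ lam ∧ lam ≤ δ + 2 * (Finset.univ.sup deg : ℕ) / ρ := by
  set M := incidenceMatrix src tgt with hM
  set d : E → ℝ := fun e => ((θ e)⁻¹ + ρ)⁻¹ with hd
  set g : E → ℝ := Mᵀ.mulVec x with hgdef
  set n : ℝ := ∑ v, x v ^ 2 with hn
  set D : ℝ := ((Finset.univ.sup deg : ℕ) : ℝ) with hD
  have hn_pos : 0 < n := by
    obtain ⟨v, hv⟩ := Function.ne_iff.mp hx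
    exact Finset.sum_pos' (fun i _ => sq_nonneg _)
      ⟨v, Finset.mem_univ v, by have := sq_abs (x v) ▸ pow_pos (abs_pos.mpr hv) 2; linarith⟩
  have hd_pos : ∀ e, 0 < d e := fun e => by
    have := hθ e; positivity
  have hd_le : ∀ e, d e ≤ ρ⁻¹ := fun e => by
    have h1 : (0:ℝ) < (θ e)⁻¹ := by have := hθ e; positivity
    exact inv_anti₀ hρ (by linarith)
  -- value of g
  have hg : ∀ e, g e = if src e = tgt e then -x (src e) else x (tgt e) - x (src e) := by
    intro e
    simp only [hgdef, mulVec, dotProduct, transpose_apply, hM, incidenceMatrix]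
    by_cases h : src e = tgt e
    · rw [if_pos h, Finset.sum_eq_single (src e)]
      · simp
      · intro v _ hv
        rw [if_neg (fun hc => hv hc.symm), if_neg (fun hc => hv (h.trans hc).symm), zero_mul]
      · simp
    · rw [if_neg h, ← Finset.sum_subset (Finset.subset_univ {src e, tgt e})]
      · rw [Finset.sum_pair h]
        rw [if_pos rfl, if_neg h, if_pos rfl]
        ring
      · intro v _ hv
        simp only [Finset.mem_insert, Finset.mem_singleton, not_or] at hv
        rw [if_neg (fun hc => hv.1 hc.symm), if_neg (fun hc => hv.2 hc.symm), zero_mul]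
  -- quadratic form identity
  have hdot : lam * n = (∑ e, d e * g e ^ 2) + δ * n := by
    have h1 : x ⬝ᵥ S.mulVec x = (∑ e, d e * g e ^ 2) + δ * n := by
      rw [hS, add_mulVec, dotProduct_add, smul_mulVec, one_mulVec]
      congr 1
      · rw [← mulVec_mulVec, ← mulVec_mulVec, dotProduct_mulVec, ← mulVec_transpose, ← hgdef]
        simp only [dotProduct, mulVec_diagonal, sq]
        exact Finset.sum_congr rfl fun e _ => by ring
      · simp only [dotProduct, Pi.smul_apply, smul_eq_mul, hn, Finset.mul_sum, sq]
        exact Finset.sum_congr rfl fun e _ => by ring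
    have h2 : x ⬝ᵥ S.mulVec x = lam * n := by
      rw [heig]
      simp only [dotProduct, Pi.smul_apply, smul_eq_mul, hn, Finset.mul_sum, sq]
      exact Finset.sum_congr rfl fun e _ => by ring
    rw [← h2, h1]
  -- bound the quadratic part
  have hQ0 : 0 ≤ ∑ e, d e * g e ^ 2 :=
    Finset.sum_nonneg fun e _ => mul_nonneg (hd_pos e).le (sq_nonneg _)
  have hedge : ∀ e, g e ^ 2 ≤ 2 * ∑ v, (if src e = v ∨ tgt e = v then x v ^ 2 else 0) := by
    intro e
    set T := ∑ v, (if src e = v ∨ tgt e = v then x v ^ 2 else 0) with hT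
    by_cases h : src e = tgt e
    · have hTa : x (src e) ^ 2 ≤ T := by
        have := Finset.single_le_sum (f := fun v => if src e = v ∨ tgt e = v then x v ^ 2 else 0)
          (fun v _ => by positivity) (Finset.mem_univ (src e))
        simpa using this
      rw [hg e, if_pos h]
      nlinarith [sq_nonneg (x (src e))]
    · have hTab : x (src e) ^ 2 + x (tgt e) ^ 2 ≤ T := by
        have hsub := Finset.sum_le_sum_of_subset_of_nonneg
          (Finset.subset_univ ({src e, tgt e} : Finset V))
          (f := fun v => if src e = v ∨ tgt e = v then x v ^ 2 else 0)
          (fun v _ _ => by positivity)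
        rw [Finset.sum_pair h] at hsub
        simpa using hsub
      rw [hg e, if_neg h]
      nlinarith [sq_nonneg (x (src e) + x (tgt e))]
  have hswap : (∑ e, ∑ v, (if src e = v ∨ tgt e = v then x v ^ 2 else 0)) ≤ D * n := by
    rw [Finset.sum_comm]
    have h1 : ∀ v, (∑ e, (if src e = v ∨ tgt e = v then x v ^ 2 else 0)) = (deg v : ℝ) * x v ^ 2 := by
      intro v
      rw [← Finset.sum_filter, Finset.sum_const, hdeg v, nsmul_eq_mul]
    rw [Finset.sum_congr rfl fun v _ => h1 v]
    rw [hn, Finset.mul_sum]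
    refine Finset.sum_le_sum fun v _ => ?_
    have hdv : (deg v : ℝ) ≤ D := by
      rw [hD]
      exact_mod_cast Nat.cast_le.mpr (Finset.le_sup (Finset.mem_univ v))
    nlinarith [sq_nonneg (x v)]
  have hQ2 : (∑ e, d e * g e ^ 2) ≤ 2 * D / ρ * n := by
    calc (∑ e, d e * g e ^ 2)
        ≤ ∑ e, ρ⁻¹ * (2 * ∑ v, (if src e = v ∨ tgt e = v then x v ^ 2 else 0)) := by
          refine Finset.sum_le_sum fun e _ => ?_
          have h1 : d e * g e ^ 2 ≤ ρ⁻¹ * g e ^ 2 :=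
            mul_le_mul_of_nonneg_right (hd_le e) (sq_nonneg _)
          have h2 : ρ⁻¹ * g e ^ 2 ≤ ρ⁻¹ * (2 * ∑ v, (if src e = v ∨ tgt e = v then x v ^ 2 else 0)) :=
            mul_le_mul_of_nonneg_left (hedge e) (by positivity)
          linarith
      _ = ρ⁻¹ * 2 * ∑ e, ∑ v, (if src e = v ∨ tgt e = v then x v ^ 2 else 0) := by
          rw [Finset.mul_sum]
          exact Finset.sum_congr rfl fun e _ => by ring
      _ ≤ ρ⁻¹ * 2 * (D * n) := by
          refine mul_le_mul_of_nonneg_left hswap (by positivity)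
      _ = 2 * D / ρ * n := by field_simp
  constructor
  · nlinarith
  · have : lam * n ≤ (δ + 2 * D / ρ) * n := by nlinarith
    exact le_of_mul_le_mul_right (by linarith) hn_pos


theorem stmt_18 {V E : Type*} [Fintype V] [Fintype E] [DecidableEq V] [DecidableEq E]
    (src tgt : E → V)
    (ρ δ : ℝ) (hρ : 0 < ρ) (hδ : 0 < δ)
    (θ : E → ℝ) (hθ : ∀ e, 0 < θ e)
    (deg : V → ℕ)
    (hdeg : ∀ v, deg v = (Finset.univ.filter (fun e => src e = v ∨ tgt e = v)).card)
    (S : Matrix V V ℝ)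
    (hS : S = (incidenceMatrix src tgt) *
              Matrix.diagonal (fun e => ((θ e)⁻¹ + ρ)⁻¹) *
              (incidenceMatrix src tgt)ᵀ + δ • (1 : Matrix V V ℝ)) :
    -- the ratio of any two eigenvalues of S (in particular λ_max/λ_min,
    -- i.e. the spectral condition number of the SPD matrix S) is bounded
    ∀ (lam₁ lam₂ : ℝ) (v₁ v₂ : V → ℝ), v₁ ≠ 0 → v₂ ≠ 0 →
      S.mulVec v₁ = lam₁ • v₁ → S.mulVec v₂ = lam₂ • v₂ →
      lam₁ / lam₂ ≤ 1 + (2 * (Finset.univ.sup deg : ℕ)) / (δ * ρ) := by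
  intro lam₁ lam₂ v₁ v₂ h₁ h₂ he₁ he₂
  obtain ⟨hl₁, hu₁⟩ := eig_bounds src tgt ρ δ hρ hδ θ hθ deg hdeg S hS lam₁ v₁ h₁ he₁
  obtain ⟨hl₂, _⟩ := eig_bounds src tgt ρ δ hρ hδ θ hθ deg hdeg S hS lam₂ v₂ h₂ he₂
  set D : ℝ := ((Finset.univ.sup deg : ℕ) : ℝ) with hD
  have hD0 : 0 ≤ D := by positivity
  have key : lam₁ / lam₂ ≤ (δ + 2 * D / ρ) / δ := by
    apply div_le_div₀ (by positivity) hu₁ hδ hl₂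
  have heq : (δ + 2 * D / ρ) / δ = 1 + 2 * D / (δ * ρ) := by
    rw [add_div, div_self hδ.ne', div_div, mul_comm ρ δ]
  linarith [key, heq ▸ key]
end
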